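/- arXiv:1811.04679 — 4 statements merged into one kernel-verified Lean document; each statement's English description precedes it below -/
import Mathlib

section
/- Let S be a monoid and let X, Y be submonoids of S such that every s ∈ S can be written in a unique way as s = xy with x ∈ X and y ∈ Y (S is the internal Zappa–Szép product X ⋈ Y). For y ∈ Y and x ∈ X, define y·x ∈ X and y@x ∈ Y to be the unique elements with yx = (y·x)(y@x). Assume Y is right cancellative (ab = cb implies a = c in Y). If x₁, x₂ ∈ X satisfy y@x₁ = y@x₂ for all y ∈ Y, then for every y ∈ Y and every s ∈ Y one has s@(y·x₁) = s@(y·x₂); that is, y·x₁ and y·x₂ again have the same @-action from every element of Y. -/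
namespace AutGrp

/-- A Mealy automaton with state set `Q` and alphabet `A`:
`step q a = (q · a, q @ a)` (output letter, next state). -/
structure Mealy (Q A : Type*) where
  step : Q → A → A × Q

namespace Mealy

variable {Q A : Type*}

/-- The output letter `q · a`. -/
def o (M : Mealy Q A) (q : Q) (a : A) : A := (M.step q a).1

/-- The next state `q @ a`. -/
def t (M : Mealy Q A) (q : Q) (a : A) : Q := (M.step q a).2

/-- Action of a single state on a word of letters: `q · w`. -/
def actA (M : Mealy Q A) : Q → List A → List A
  | _, [] => []
  | q, a :: w => M.o q a :: M.actA (M.t q a) w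

/-- State reached from `q` after reading the word `w`: `q @ w`. -/
def stA (M : Mealy Q A) : Q → List A → Q
  | q, [] => q
  | q, a :: w => M.stA (M.t q a) w

/-- Action of a word of states on a word of letters: `s · u` (rightmost state acts first). -/
def actW (M : Mealy Q A) : List Q → List A → List A
  | [], u => u
  | q :: s, u => M.actA q (M.actW s u)

/-- Word of states reached after reading `u`: `s @ u`. -/
def stW (M : Mealy Q A) : List Q → List A → List Q
  | [], _ => []
  | q :: s, u => M.stA q (M.actW s u) :: M.stW s u

/-- `M` is invertible if each state acts on `A` by a bijection. -/
def Invertible (M : Mealy Q A) : Prop := ∀ q : Q, Function.Bijective (M.o q)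

/-- `M` is reversible if each letter acts on `Q` by a bijection. -/
def Reversible (M : Mealy Q A) : Prop := ∀ a : A, Function.Bijective (fun q => M.t q a)

theorem actA_append (M : Mealy Q A) (q : Q) (x y : List A) :
    M.actA q (x ++ y) = M.actA q x ++ M.actA (M.stA q x) y := by
  induction x generalizing q with
  | nil => simp [actA, stA]
  | cons a w ih => simp [actA, stA, ih]

theorem stA_append (M : Mealy Q A) (q : Q) (x y : List A) :
    M.stA q (x ++ y) = M.stA (M.stA q x) y := by
  induction x generalizing q with
  | nil => simp [stA]
  | cons a w ih => simp [stA, ih]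

theorem actW_append_states (M : Mealy Q A) (s u : List Q) (w : List A) :
    M.actW (s ++ u) w = M.actW s (M.actW u w) := by
  induction s with
  | nil => simp [actW]
  | cons q s ih => simp [actW, ih]

theorem actW_append (M : Mealy Q A) (s : List Q) (x y : List A) :
    M.actW s (x ++ y) = M.actW s x ++ M.actW (M.stW s x) y := by
  induction s with
  | nil => simp [actW, stW]
  | cons q s ih => simp [actW, stW, ih, actA_append]

theorem stW_append (M : Mealy Q A) (s : List Q) (x y : List A) :
    M.stW s (x ++ y) = M.stW (M.stW s x) y := by
  induction s with
  | nil => simp [stW]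
  | cons q s ih => simp [stW, actW, ih, actW_append, stA_append]

theorem actW_stW_congr (M : Mealy Q A) {p p' : List Q}
    (h : ∀ w : List A, M.actW p w = M.actW p' w) (u w : List A) :
    M.actW (M.stW p u) w = M.actW (M.stW p' u) w := by
  have h1 := M.actW_append p u w
  have h2 := M.actW_append p' u w
  rw [h u, h (u ++ w)] at h1
  rw [h1] at h2
  exact List.append_cancel_left h2

/-- The congruence `~Q` on the free monoid `Q*`: two words of states are equivalent
iff they act identically on `A*`. -/
def conQ (M : Mealy Q A) : Con (FreeMonoid Q) where
  r s u := ∀ w : List A, M.actW s.toList w = M.actW u.toList w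
  iseqv := ⟨fun _ _ => rfl, fun h w => (h w).symm, fun h1 h2 w => (h1 w).trans (h2 w)⟩
  mul' := by
    intro a b c d h1 h2 w
    simp only [FreeMonoid.toList_mul, actW_append_states]
    rw [h2 w, h1 (M.actW d.toList w)]

/-- The congruence `~A` on the free monoid `A*`: `u ~A v` iff `s @ u = s @ v` for all `s ∈ Q*`. -/
def conA (M : Mealy Q A) : Con (FreeMonoid A) where
  r u v := ∀ s : List Q, M.stW s u.toList = M.stW s v.toList
  iseqv := ⟨fun _ _ => rfl, fun h s => (h s).symm, fun h1 h2 s => (h1 s).trans (h2 s)⟩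
  mul' := by
    intro a b c d h1 h2 s
    simp only [FreeMonoid.toList_mul, stW_append]
    rw [h1 s, h2 (M.stW s b.toList)]

/-- The congruence `~D` on the free monoid `A*`: `u ~D v` iff `s @ u ~Q s @ v` for all `s ∈ Q*`. -/
def conD (M : Mealy Q A) : Con (FreeMonoid A) where
  r u v := ∀ (s : List Q) (w : List A),
    M.actW (M.stW s u.toList) w = M.actW (M.stW s v.toList) w
  iseqv := ⟨fun _ _ _ => rfl, fun h s w => (h s w).symm,
    fun h1 h2 s w => (h1 s w).trans (h2 s w)⟩
  mul' := by
    intro a b c d h1 h2 s w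
    simp only [FreeMonoid.toList_mul, stW_append]
    calc M.actW (M.stW (M.stW s a.toList) c.toList) w
        = M.actW (M.stW (M.stW s b.toList) c.toList) w :=
          M.actW_stW_congr (h1 s) c.toList w
      _ = M.actW (M.stW (M.stW s b.toList) d.toList) w := h2 _ w

/-- The automaton semigroup (monoid) `P_M = Q* / ~Q`. -/
abbrev PM (M : Mealy Q A) : Type _ := M.conQ.Quotient

/-- The dual automaton semigroup (monoid) `D_M = A* / ~A`. -/
abbrev DM (M : Mealy Q A) : Type _ := M.conA.Quotient

/-- The monoid `D'_M = A* / ~D`. -/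
abbrev DM' (M : Mealy Q A) : Type _ := M.conD.Quotient

/-- The class in `P_M` of a word of states. -/
def PMmk (M : Mealy Q A) (s : List Q) : M.PM := M.conQ.mk' (FreeMonoid.ofList s)

/-- The class in `D_M` of a word of letters. -/
def DMmk (M : Mealy Q A) (u : List A) : M.DM := M.conA.mk' (FreeMonoid.ofList u)

/-- The class in `D'_M` of a word of letters. -/
def DM'mk (M : Mealy Q A) (u : List A) : M.DM' := M.conD.mk' (FreeMonoid.ofList u)

/-- `M` is self-invertible if `P_M` is a group. -/
def SelfInvertible (M : Mealy Q A) : Prop :=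
  ∀ x : M.PM, ∃ y : M.PM, x * y = 1 ∧ y * x = 1

/-- The enriched automaton of an invertible automaton: states `Q ⊕ Q`, where `Sum.inl q` is `q`
and `Sum.inr q` is the formal inverse `q⁻¹`; `τ̃(q,a) = τ(q,a)` and
`τ̃(q⁻¹, q·a) = (a, (q@a)⁻¹)`. -/
noncomputable def enriched [Nonempty A] (M : Mealy Q A) : Mealy (Q ⊕ Q) A where
  step := fun p b =>
    match p with
    | Sum.inl q => (M.o q b, Sum.inl (M.t q b))
    | Sum.inr q =>
        (Function.invFun (M.o q) b, Sum.inr (M.t q (Function.invFun (M.o q) b)))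

/-- The monoid `Δ_M` presented by generators `Q ⊔ A` and relations `q a = (q·a)(q@a)`. -/
def deltaCon (M : Mealy Q A) : Con (FreeMonoid (Q ⊕ A)) :=
  conGen (fun w₁ w₂ => ∃ (q : Q) (a : A),
    w₁ = FreeMonoid.of (Sum.inl q) * FreeMonoid.of (Sum.inr a) ∧
    w₂ = FreeMonoid.of (Sum.inr (M.o q a)) * FreeMonoid.of (Sum.inl (M.t q a)))

end Mealy

/-- Evaluation of a positive word in the letters `y` (for `true`) and `z` (for `false`). -/
def evalPair {S : Type*} [Monoid S] (y z : S) : List Bool → S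
  | [] => 1
  | b :: l => (bif b then y else z) * evalPair y z l

/-- `y` and `z` freely generate a free subsemigroup of rank two: distinct nonempty
positive words in `y, z` represent distinct elements. -/
def IsFreePair {S : Type*} [Monoid S] (y z : S) : Prop :=
  ∀ l₁ l₂ : List Bool, l₁ ≠ [] → l₂ ≠ [] →
    evalPair y z l₁ = evalPair y z l₂ → l₁ = l₂

/-- `x` has infinite order: `{x, x², x³, …}` is infinite. -/
def InfiniteOrder {S : Type*} [Monoid S] (x : S) : Prop :=
  (Set.range fun n : ℕ => x ^ (n + 1)).Infinite

/-- The length-`n` prefix of a sequence. -/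
def seqTake {A : Type*} (ξ : ℕ → A) (n : ℕ) : List A := (List.range n).map ξ

/-- The `n`-th power `u^n` of a finite word. -/
def wpow {A : Type*} (u : List A) : ℕ → List A
  | 0 => []
  | n + 1 => u ++ wpow u n

/-- The eventually periodic sequence `u v v v ⋯`. -/
noncomputable def prePeriodic {A : Type*} [Nonempty A] (u v : List A) : ℕ → A :=
  fun n => if n < u.length then u.getD n (Classical.arbitrary A)
    else v.getD ((n - u.length) % v.length) (Classical.arbitrary A)

/-- The periodic sequence `u^ω = u u u ⋯`. -/
noncomputable def periodic {A : Type*} [Nonempty A] (u : List A) : ℕ → A :=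
  prePeriodic [] u

namespace Mealy

/-- The action of a word of states on a sequence: `s · ξ` is the sequence whose
length-`n` prefix is `s · (length-`n` prefix of `ξ`)`. -/
noncomputable def actSeq {Q A : Type*} [Nonempty A] (M : Mealy Q A)
    (s : List Q) (ξ : ℕ → A) : ℕ → A :=
  fun n => (M.actW s (seqTake ξ (n + 1))).getD n (Classical.arbitrary A)

/-- The language of all prefixes of the orbit of `a^ω` under `P_M`. -/
def Lan {Q A : Type*} (M : Mealy Q A) (a : A) : Set (List A) :=
  {v | ∃ (k : ℕ) (s : List Q), v = M.actW s (List.replicate k a)}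

/-- The degree of `v` in `Lan(a)`: the number of letters `b` with `v b ∈ Lan(a)`. -/
noncomputable def deg {Q A : Type*} (M : Mealy Q A) (a : A) (v : List A) : ℕ :=
  {b : A | v ++ [b] ∈ M.Lan a}.ncard

end Mealy

/-- A language is regular if it is recognized by a deterministic finite automaton. -/
def IsRegular {A : Type*} (L : Set (List A)) : Prop :=
  ∃ (σ : Type) (_ : Fintype σ) (dfa : DFA A σ), ∀ w : List A, w ∈ dfa.accepts ↔ w ∈ L

section ZappaSzep

variable {S : Type*} [Monoid S] {X Y : Submonoid S}

theorem injective_mul_of_existsUnique_factorization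
    (hfac : ∀ s : S, ∃! p : X × Y, s = (p.1 : S) * (p.2 : S)) :
    Function.Injective fun p : X × Y => (p.1 : S) * (p.2 : S) :=
  fun _ _ hpq => (hfac _).unique rfl hpq

theorem at_mul_of_injective_mul {dot : Y → X → X} {at' : Y → X → Y}
    (hinj : Function.Injective fun p : X × Y => (p.1 : S) * (p.2 : S))
    (hda : ∀ (y : Y) (x : X), (y : S) * (x : S) = ((dot y x : S)) * ((at' y x : S)))
    (s y : Y) (x : X) : at' (s * y) x = at' s (dot y x) * at' y x := by
  have hpair : ((dot (s * y) x, at' (s * y) x) : X × Y) =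
      (dot s (dot y x), at' s (dot y x) * at' y x) := hinj <| by
    calc ((dot (s * y) x : X) : S) * ((at' (s * y) x : Y) : S)
        = (s : S) * ((y : S) * (x : S)) := by rw [← hda, Submonoid.coe_mul, mul_assoc]
      _ = ((s : S) * (dot y x : S)) * (at' y x : S) := by rw [hda, mul_assoc]
      _ = (dot s (dot y x) : S) * ((at' s (dot y x) * at' y x : Y) : S) := by
        rw [hda, Submonoid.coe_mul, mul_assoc]
  exact congrArg Prod.snd hpair

end ZappaSzep

/-- In an internal Zappa–Szép product `S = X ⋈ Y` with `Y` right cancellative,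
if `x₁, x₂ ∈ X` have the same `@`-action from every element of `Y`, then so do `y·x₁` and
`y·x₂` for every `y ∈ Y`. -/
theorem stmt4 {S : Type*} [Monoid S] (X Y : Submonoid S)
    (hfac : ∀ s : S, ∃! p : X × Y, s = (p.1 : S) * (p.2 : S))
    (dot : Y → X → X) (at' : Y → X → Y)
    (hda : ∀ (y : Y) (x : X), (y : S) * (x : S) = ((dot y x : S)) * ((at' y x : S)))
    (hY : ∀ a b c : Y, a * b = c * b → a = c)
    (x₁ x₂ : X) (h : ∀ y : Y, at' y x₁ = at' y x₂) :
    ∀ (y s : Y), at' s (dot y x₁) = at' s (dot y x₂) := by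
  intro y s
  have at_mul := at_mul_of_injective_mul (injective_mul_of_existsUnique_factorization hfac) hda
  refine hY _ (at' y x₁) _ ?_
  calc at' s (dot y x₁) * at' y x₁
      = at' (s * y) x₁ := (at_mul s y x₁).symm
    _ = at' (s * y) x₂ := h (s * y)
    _ = at' s (dot y x₂) * at' y x₁ := by rw [at_mul, h y]

end AutGrp
end

section
/- Let M = (Q, A, τ) be a Mealy automaton and let Δ_M be the monoid presented by the generating set Q ⊔ A subject to the relations qa = (q·a)(q@a) for all q ∈ Q and a ∈ A. Then the map from A* × Q* to Δ_M sending a pair (a₁a₂…a_k, q₁q₂…q_l) to the image in Δ_M of the word a₁a₂…a_k q₁q₂…q_l is a bijection; that is, every element of Δ_M has a unique normal form consisting of a word in A followed by a word in Q, so Δ_M is the internal Zappa–Szép product of the free monoids A* and Q*. -/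
namespace AutGrp

/-!
On `A* × Q*` put the Zappa–Szép multiplication `(u, s) (v, r) = (u (s · v), (s @ v) r)`; it is
associative because `s · (x y) = (s · x) ((s @ x) · y)` and `(s t) @ x = (s @ (t · x)) (t @ x)`.
The defining relations `q a = (q · a)(q @ a)` hold there, so evaluation of words descends to a
homomorphism `Δ_M → A* ⋈ Q*`. Conversely, the relations push any word of states to the right of any
word of letters, `s v = (s · v)(s @ v)` in `Δ_M`, which makes `(u, s) ↦ [u s]` a homomorphism
`A* ⋈ Q* → Δ_M`. The two are mutually inverse: one way on normal forms, the other on generators.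
-/

namespace Mealy

variable {Q A : Type*} (M : Mealy Q A)

@[simp]
theorem actW_nil_right (s : List Q) : M.actW s [] = [] := by
  induction s with
  | nil => rfl
  | cons q s ih => simp [actW, ih, actA]

@[simp]
theorem stW_nil_right (s : List Q) : M.stW s [] = s := by
  induction s with
  | nil => rfl
  | cons q s ih => simp [stW, ih, stA]

theorem stW_append_states (s r : List Q) (w : List A) :
    M.stW (s ++ r) w = M.stW s (M.actW r w) ++ M.stW r w := by
  induction s with
  | nil => rfl
  | cons q s ih => simp [stW, actW_append_states, ih]

def zsMul (p r : List A × List Q) : List A × List Q :=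
  (p.1 ++ M.actW p.2 r.1, M.stW p.2 r.1 ++ r.2)

theorem zsMul_assoc (p r s : List A × List Q) :
    M.zsMul (M.zsMul p r) s = M.zsMul p (M.zsMul r s) := by
  simp [zsMul, actW_append, stW_append, actW_append_states, stW_append_states]

/-- `A* × Q*`, indexed by `M` so that it can carry the multiplication `zsMul` of `M`. -/
def ZappaSzep (_M : Mealy Q A) : Type _ := List A × List Q

instance : Monoid M.ZappaSzep where
  mul := M.zsMul
  one := ([], [])
  mul_assoc := M.zsMul_assoc
  one_mul (p : List A × List Q) := show M.zsMul ([], []) p = p by simp [zsMul, actW, stW]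
  mul_one (p : List A × List Q) := show M.zsMul p ([], []) = p by simp [zsMul]

def evalZappaSzep : FreeMonoid (Q ⊕ A) →* M.ZappaSzep :=
  FreeMonoid.lift fun x => (x.elim (fun q => ([], [q])) (fun a => ([a], [])) : List A × List Q)

theorem evalZappaSzep_letters (u : List A) :
    M.evalZappaSzep (FreeMonoid.ofList (u.map Sum.inr)) = ((u, []) : List A × List Q) := by
  induction u with
  | nil => rfl
  | cons a u ih =>
    rw [List.map_cons, FreeMonoid.ofList_cons, map_mul, ih]
    rfl

theorem evalZappaSzep_states (s : List Q) :
    M.evalZappaSzep (FreeMonoid.ofList (s.map Sum.inl)) = (([], s) : List A × List Q) := by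
  induction s with
  | nil => rfl
  | cons q s ih =>
    rw [List.map_cons, FreeMonoid.ofList_cons, map_mul, ih]
    rfl

theorem deltaCon_le_ker_evalZappaSzep : M.deltaCon ≤ Con.ker M.evalZappaSzep :=
  Con.conGen_le.2 <| by
    rintro _ _ ⟨q, a, rfl, rfl⟩
    show M.zsMul ([], [q]) ([a], []) = M.zsMul ([M.o q a], []) ([], [M.t q a])
    simp [zsMul, actW, actA, stW, stA]

def normalForm : M.deltaCon.Quotient →* M.ZappaSzep :=
  M.deltaCon.lift M.evalZappaSzep M.deltaCon_le_ker_evalZappaSzep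

theorem mk'_state_mul_letter (q : Q) (a : A) :
    M.deltaCon.mk' (FreeMonoid.of (Sum.inl q)) * M.deltaCon.mk' (FreeMonoid.of (Sum.inr a)) =
      M.deltaCon.mk' (FreeMonoid.of (Sum.inr (M.o q a))) *
        M.deltaCon.mk' (FreeMonoid.of (Sum.inl (M.t q a))) := by
  simp only [← map_mul]
  exact (Con.eq _).2 <| ConGen.Rel.of _ _ ⟨q, a, rfl, rfl⟩

theorem mk'_state_mul_letters (q : Q) (u : List A) :
    M.deltaCon.mk' (FreeMonoid.of (Sum.inl q)) *
        M.deltaCon.mk' (FreeMonoid.ofList (u.map Sum.inr)) =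
      M.deltaCon.mk' (FreeMonoid.ofList ((M.actA q u).map Sum.inr)) *
        M.deltaCon.mk' (FreeMonoid.of (Sum.inl (M.stA q u))) := by
  induction u generalizing q with
  | nil => simp [actA, stA]
  | cons a u ih =>
    simp only [actA, stA, List.map_cons, FreeMonoid.ofList_cons, map_mul]
    rw [← mul_assoc, mk'_state_mul_letter, mul_assoc, ih, mul_assoc]

theorem mk'_states_mul_letters (s : List Q) (u : List A) :
    M.deltaCon.mk' (FreeMonoid.ofList (s.map Sum.inl)) *
        M.deltaCon.mk' (FreeMonoid.ofList (u.map Sum.inr)) =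
      M.deltaCon.mk' (FreeMonoid.ofList ((M.actW s u).map Sum.inr)) *
        M.deltaCon.mk' (FreeMonoid.ofList ((M.stW s u).map Sum.inl)) := by
  induction s with
  | nil => simp [actW, stW]
  | cons q s ih =>
    simp only [actW, stW, List.map_cons, FreeMonoid.ofList_cons, map_mul]
    rw [mul_assoc, ih, ← mul_assoc, mk'_state_mul_letters, mul_assoc]

def ofNormalForm : M.ZappaSzep →* M.deltaCon.Quotient where
  toFun p := M.deltaCon.mk' (FreeMonoid.ofList (p.1.map Sum.inr ++ p.2.map Sum.inl))
  map_one' := rfl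
  map_mul' p r := by
    obtain ⟨u, s⟩ := p
    obtain ⟨v, t⟩ := r
    change M.deltaCon.mk' (FreeMonoid.ofList
      ((u ++ M.actW s v).map Sum.inr ++ (M.stW s v ++ t).map Sum.inl)) = _
    simp only [List.map_append, FreeMonoid.ofList_append, map_mul, mul_assoc]
    rw [← mul_assoc (M.deltaCon.mk' (FreeMonoid.ofList (s.map Sum.inl))),
      mk'_states_mul_letters, mul_assoc]

theorem normalForm_ofNormalForm (p : M.ZappaSzep) : M.normalForm (M.ofNormalForm p) = p := by
  obtain ⟨u, s⟩ := p
  change M.evalZappaSzep (FreeMonoid.ofList (u.map Sum.inr) * FreeMonoid.ofList (s.map Sum.inl)) = _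
  rw [map_mul, evalZappaSzep_letters, evalZappaSzep_states]
  show ((u ++ [], [] ++ s) : List A × List Q) = (u, s)
  simp

theorem ofNormalForm_comp_normalForm :
    M.ofNormalForm.comp M.normalForm = MonoidHom.id M.deltaCon.Quotient := by
  ext (q | a) <;> rfl

def zappaSzepEquivDelta : M.ZappaSzep ≃* M.deltaCon.Quotient :=
  MonoidHom.toMulEquiv M.ofNormalForm M.normalForm
    (MonoidHom.ext M.normalForm_ofNormalForm) M.ofNormalForm_comp_normalForm

end Mealy

theorem stmt5_general {Q A : Type*} (M : Mealy Q A) :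
    Function.Bijective (fun p : List A × List Q =>
      M.deltaCon.mk' (FreeMonoid.ofList (p.1.map Sum.inr ++ p.2.map Sum.inl))) :=
  M.zappaSzepEquivDelta.bijective

/-- The monoid `Δ_M`, presented by generators `Q ⊔ A` and relations
`q a = (q·a)(q@a)`, is the internal Zappa–Szép product of the free monoids `A*` and `Q*`:
the map sending `(a₁…a_k, q₁…q_l)` to the class of the word `a₁…a_k q₁…q_l` is a bijection. -/
theorem stmt5 {Q A : Type*} [Fintype Q] [Nonempty Q] [Fintype A] [Nonempty A]
    (M : Mealy Q A) :
    Function.Bijective (fun p : List A × List Q =>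
      M.deltaCon.mk' (FreeMonoid.ofList (p.1.map Sum.inr ++ p.2.map Sum.inl))) :=
  stmt5_general M

end AutGrp
end

section
/- Let M = (Q, A, τ) be an invertible Mealy automaton, let P_M be its automaton semigroup and let P_M̃ be its automaton group (the automaton semigroup of the enriched automaton M̃). Then P_M contains an element of infinite order if and only if P_M̃ contains an element of infinite order. -/
/-!
Since `M̃` acts on positive words exactly as `M` does, `q ↦ q` embeds `P_M` into `P_M̃`, which
gives one direction. Conversely, `q` and `q⁻¹` are mutually inverse units of `P_M̃`. If every
element of `P_M` has finite order, then so does the unit `q`, hence `q⁻¹` is a positive power of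
`q`; the embedding is then onto, and an element of infinite order of `P_M̃` would come from one
of `P_M`.
-/

namespace AutGrp

section InfiniteOrder

variable {S T : Type*} [Monoid S] [Monoid T]

theorem infiniteOrder_iff_infinite_powers (x : S) :
    InfiniteOrder x ↔ (Submonoid.powers x : Set S).Infinite := by
  have hsub : (Set.range fun n : ℕ => x ^ (n + 1)) ⊆ Submonoid.powers x :=
    Set.range_subset_iff.2 fun n => ⟨n + 1, rfl⟩
  have hsup : (Submonoid.powers x : Set S) ⊆ insert 1 (Set.range fun n : ℕ => x ^ (n + 1)) := by
    rintro _ ⟨_ | n, rfl⟩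
    · exact Set.mem_insert_iff.2 (Or.inl (pow_zero x))
    · exact Set.mem_insert_of_mem _ ⟨n, rfl⟩
  exact ⟨fun h => h.mono hsub, fun h hfin => h ((hfin.insert 1).subset hsup)⟩

theorem infiniteOrder_iff_not_isOfFinOrder {G : Type*} [LeftCancelMonoid G] (x : G) :
    InfiniteOrder x ↔ ¬IsOfFinOrder x := by
  rw [infiniteOrder_iff_infinite_powers, infinite_powers]

theorem InfiniteOrder.of_map (f : S →* T) {x : S} (h : InfiniteOrder (f x)) :
    InfiniteOrder x := by
  intro hfin
  refine h ((hfin.image f).subset ?_)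
  rintro _ ⟨n, rfl⟩
  exact ⟨x ^ (n + 1), ⟨n, rfl⟩, map_pow f x (n + 1)⟩

theorem infiniteOrder_map_iff (f : S →* T) (hf : Function.Injective f) {x : S} :
    InfiniteOrder (f x) ↔ InfiniteOrder x := by
  refine ⟨InfiniteOrder.of_map f, fun h => ?_⟩
  have himage := h.image hf.injOn
  rw [← Set.range_comp] at himage
  simp only [Function.comp_def, map_pow] at himage
  exact himage

theorem inv_mem_powers_of_not_infiniteOrder (u : Tˣ) (h : ¬InfiniteOrder (u : T)) :
    ((u⁻¹ : Tˣ) : T) ∈ Submonoid.powers (u : T) := by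
  rw [← Units.coeHom_apply, infiniteOrder_map_iff _ Units.val_injective,
    infiniteOrder_iff_not_isOfFinOrder, not_not] at h
  obtain ⟨k, hk⟩ := h.mem_powers_iff_mem_zpowers.2 (inv_mem (Subgroup.mem_zpowers u))
  exact ⟨k, by rw [← hk, Units.val_pow_eq_pow_val]⟩

end InfiniteOrder

namespace Mealy

variable {Q A : Type*} [Nonempty A] (M : Mealy Q A)

theorem enriched_actA_inl (q : Q) (u : List A) :
    M.enriched.actA (Sum.inl q) u = M.actA q u := by
  induction u generalizing q with
  | nil => rfl
  | cons a w ih => exact congrArg (M.o q a :: ·) (ih _)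

theorem enriched_actW_map_inl (s : List Q) (u : List A) :
    M.enriched.actW (s.map Sum.inl) u = M.actW s u := by
  induction s with
  | nil => rfl
  | cons q s ih => simp only [List.map_cons, actW, ih, enriched_actA_inl]

theorem enriched_actA_inr_actA (hinv : M.Invertible) (q : Q) (u : List A) :
    M.enriched.actA (Sum.inr q) (M.actA q u) = u := by
  induction u generalizing q with
  | nil => rfl
  | cons a w ih =>
    have hleft : Function.invFun (M.o q) (M.o q a) = a :=
      Function.leftInverse_invFun (hinv q).injective a
    change Function.invFun (M.o q) (M.o q a) :: M.enriched.actA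
      (Sum.inr (M.t q (Function.invFun (M.o q) (M.o q a)))) (M.actA (M.t q a) w) = a :: w
    rw [hleft, ih]

theorem actA_enriched_actA_inr (hinv : M.Invertible) (q : Q) (u : List A) :
    M.actA q (M.enriched.actA (Sum.inr q) u) = u := by
  induction u generalizing q with
  | nil => rfl
  | cons b w ih =>
    have hright : M.o q (Function.invFun (M.o q) b) = b :=
      Function.rightInverse_invFun (hinv q).surjective b
    change M.o q (Function.invFun (M.o q) b) :: M.actA (M.t q (Function.invFun (M.o q) b))
      (M.enriched.actA (Sum.inr (M.t q (Function.invFun (M.o q) b))) w) = b :: w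
    rw [hright, ih]

theorem conQ_enriched_map_inl_iff (w w' : FreeMonoid Q) :
    M.enriched.conQ (FreeMonoid.map Sum.inl w) (FreeMonoid.map Sum.inl w') ↔ M.conQ w w' := by
  change (∀ u, _ = _) ↔ ∀ u, _ = _
  simp only [FreeMonoid.toList_map, enriched_actW_map_inl]

noncomputable def toEnriched : M.PM →* M.enriched.PM :=
  M.conQ.lift (M.enriched.conQ.mk'.comp (FreeMonoid.map Sum.inl)) fun _ _ h =>
    M.enriched.conQ.eq.2 ((M.conQ_enriched_map_inl_iff _ _).2 h)

theorem toEnriched_mk' (w : FreeMonoid Q) :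
    M.toEnriched (M.conQ.mk' w) = M.enriched.conQ.mk' (FreeMonoid.map Sum.inl w) :=
  Con.lift_mk' _ _

theorem toEnriched_injective : Function.Injective M.toEnriched := by
  intro x y hxy
  obtain ⟨w, rfl⟩ := M.conQ.mk'_surjective x
  obtain ⟨w', rfl⟩ := M.conQ.mk'_surjective y
  rw [toEnriched_mk', toEnriched_mk'] at hxy
  exact M.conQ.eq.2 ((M.conQ_enriched_map_inl_iff w w').1 (M.enriched.conQ.eq.1 hxy))

noncomputable def enrichedUnit (hinv : M.Invertible) (q : Q) : M.enriched.PMˣ where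
  val := M.enriched.conQ.mk' (FreeMonoid.of (Sum.inl q))
  inv := M.enriched.conQ.mk' (FreeMonoid.of (Sum.inr q))
  val_inv := by
    rw [← map_mul, ← map_one M.enriched.conQ.mk']
    refine M.enriched.conQ.eq.2 fun u => ?_
    simp [actW, enriched_actA_inl, actA_enriched_actA_inr M hinv]
  inv_val := by
    rw [← map_mul, ← map_one M.enriched.conQ.mk']
    refine M.enriched.conQ.eq.2 fun u => ?_
    simp [actW, enriched_actA_inl, enriched_actA_inr_actA M hinv]

theorem toEnriched_surjective_of_forall_not_infiniteOrder (hinv : M.Invertible)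
    (htor : ∀ x : M.PM, ¬InfiniteOrder x) : Function.Surjective M.toEnriched := by
  have hgen : ∀ p : Q ⊕ Q,
      M.enriched.conQ.mk' (FreeMonoid.of p) ∈ MonoidHom.mrange M.toEnriched := by
    rintro (q | q)
    · exact ⟨M.conQ.mk' (FreeMonoid.of q), M.toEnriched_mk' _⟩
    · set u := M.enrichedUnit hinv q
      have hu : M.toEnriched (M.conQ.mk' (FreeMonoid.of q)) = u := M.toEnriched_mk' _
      have hfin : ¬InfiniteOrder (u : M.enriched.PM) := by
        rw [← hu, infiniteOrder_map_iff _ M.toEnriched_injective]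
        exact htor _
      exact Submonoid.powers_le.2 (MonoidHom.mem_mrange.2 ⟨_, hu⟩)
        (inv_mem_powers_of_not_infiniteOrder u hfin)
  rw [← MonoidHom.mrange_eq_top, eq_top_iff]
  rintro y -
  obtain ⟨w, rfl⟩ := M.enriched.conQ.mk'_surjective y
  induction w using FreeMonoid.inductionOn' with
  | one => exact one_mem _
  | of_mul p w ih => rw [map_mul]; exact mul_mem (hgen p) ih

end Mealy

theorem stmt7_general {Q A : Type*} [Nonempty A]
    (M : Mealy Q A) (hinv : M.Invertible) :
    (∃ x : M.PM, InfiniteOrder x) ↔ (∃ x : (M.enriched).PM, InfiniteOrder x) := by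
  constructor
  · rintro ⟨x, hx⟩
    exact ⟨M.toEnriched x, (infiniteOrder_map_iff _ M.toEnriched_injective).2 hx⟩
  · rintro ⟨y, hy⟩
    by_contra! htor
    obtain ⟨x, rfl⟩ := M.toEnriched_surjective_of_forall_not_infiniteOrder hinv htor y
    exact htor x (hy.of_map _)

/-- For an invertible Mealy automaton `M`, the automaton semigroup `P_M`
contains an element of infinite order iff the automaton group `P_M̃` does. -/
theorem stmt7 {Q A : Type*} [Fintype Q] [Nonempty Q] [Fintype A] [Nonempty A]
    (M : Mealy Q A) (hinv : M.Invertible) :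
    (∃ x : M.PM, InfiniteOrder x) ↔ (∃ x : (M.enriched).PM, InfiniteOrder x) :=
  stmt7_general M hinv

end AutGrp
end

section
/- Let M = (Q, A, τ) be a self-invertible Mealy automaton, let a ∈ A, and let Lan(a) = ⋃_{k ≥ 0} { s·aᵏ : s ∈ Q* }. If v₁, v₂ ∈ Lan(a) have the same length, then Deg(v₁) = Deg(v₂), where Deg(v) denotes the number of letters b ∈ A such that vb ∈ Lan(a). -/
namespace AutGrp

/-!
Write `v₁ = s₁ · aⁿ` and `v₂ = s₂ · aⁿ`. Since `P_M` is a group, `s₁` has a left inverse `w`, and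
`g = s₂ w` sends `v₁` to `v₂`. Then `g · (v₁ b) = v₂ ((g @ v₁) · b)`, the orbit `Lan(a)` is stable
under `g`, and `b ↦ (g @ v₁) · b` is injective because `g @ v₁` is again invertible. Hence
`Deg(v₁) ≤ Deg(v₂)`, and the reverse inequality holds by symmetry.
-/

namespace Mealy

variable {Q A : Type*} (M : Mealy Q A)

theorem actA_length (q : Q) (u : List A) : (M.actA q u).length = u.length := by
  induction u generalizing q with
  | nil => rfl
  | cons a w ih => simp [actA, ih]

theorem actW_length (s : List Q) (u : List A) : (M.actW s u).length = u.length := by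
  induction s with
  | nil => rfl
  | cons q s ih => simp [actW, actA_length, ih]

def actLetter (s : List Q) (b : A) : A := s.foldr M.o b

theorem actW_singleton (s : List Q) (b : A) : M.actW s [b] = [M.actLetter s b] := by
  induction s with
  | nil => rfl
  | cons q s ih => simp only [actW, ih, actA]; rfl

theorem exists_leftInverse_actW (hg : M.SelfInvertible) (s : List Q) :
    ∃ w : List Q, Function.LeftInverse (M.actW w) (M.actW s) := by
  obtain ⟨y, -, hys⟩ := hg (M.PMmk s)
  obtain ⟨w, rfl⟩ := Con.mk'_surjective (c := M.conQ) y
  refine ⟨w.toList, fun u => ?_⟩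
  rw [PMmk, ← map_mul, ← map_one M.conQ.mk'] at hys
  simpa [← actW_append_states, actW] using M.conQ.eq.mp hys u

theorem actW_injective (hg : M.SelfInvertible) (s : List Q) : Function.Injective (M.actW s) :=
  let ⟨_, hw⟩ := M.exists_leftInverse_actW hg s
  hw.injective

theorem actLetter_injective (hg : M.SelfInvertible) (s : List Q) :
    Function.Injective (M.actLetter s) := fun b c h =>
  List.singleton_injective <| M.actW_injective hg s <| by rw [actW_singleton, actW_singleton, h]

theorem mem_Lan_iff {a : A} {v : List A} :
    v ∈ M.Lan a ↔ ∃ s : List Q, v = M.actW s (List.replicate v.length a) := by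
  refine ⟨?_, fun ⟨s, hs⟩ => ⟨_, s, hs⟩⟩
  rintro ⟨k, s, rfl⟩
  exact ⟨s, by rw [actW_length, List.length_replicate]⟩

theorem actW_mem_Lan {a : A} {v : List A} (s : List Q) (hv : v ∈ M.Lan a) :
    M.actW s v ∈ M.Lan a := by
  obtain ⟨k, t, rfl⟩ := hv
  exact ⟨k, s ++ t, (M.actW_append_states s t _).symm⟩

theorem exists_actW_eq_of_mem_Lan (hg : M.SelfInvertible) {a : A} {v₁ v₂ : List A}
    (h₁ : v₁ ∈ M.Lan a) (h₂ : v₂ ∈ M.Lan a) (hlen : v₁.length = v₂.length) :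
    ∃ g : List Q, M.actW g v₁ = v₂ := by
  obtain ⟨s₁, hs₁⟩ := M.mem_Lan_iff.mp h₁
  obtain ⟨s₂, hs₂⟩ := M.mem_Lan_iff.mp h₂
  obtain ⟨w, hw⟩ := M.exists_leftInverse_actW hg s₁
  refine ⟨s₂ ++ w, ?_⟩
  rw [actW_append_states, hs₁, hw, hs₂, hlen]

theorem deg_le_of_actW_eq [Finite A] (hg : M.SelfInvertible) (a : A) {v₁ v₂ : List A}
    {g : List Q} (hv : M.actW g v₁ = v₂) : M.deg a v₁ ≤ M.deg a v₂ := by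
  have hmaps : ∀ b, v₁ ++ [b] ∈ M.Lan a → v₂ ++ [M.actLetter (M.stW g v₁) b] ∈ M.Lan a :=
    fun b hb => by
      simpa [actW_append, actW_singleton, hv] using M.actW_mem_Lan g hb
  exact Set.ncard_le_ncard_of_injOn _ hmaps
    (M.actLetter_injective hg _).injOn (Set.toFinite _)

end Mealy

theorem stmt14_general {Q A : Type*} [Fintype A]
    (M : Mealy Q A) (hg : M.SelfInvertible) (a : A) (v₁ v₂ : List A)
    (h₁ : v₁ ∈ M.Lan a) (h₂ : v₂ ∈ M.Lan a) (hlen : v₁.length = v₂.length) :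
    M.deg a v₁ = M.deg a v₂ := by
  obtain ⟨g₁₂, hg₁₂⟩ := M.exists_actW_eq_of_mem_Lan hg h₁ h₂ hlen
  obtain ⟨g₂₁, hg₂₁⟩ := M.exists_actW_eq_of_mem_Lan hg h₂ h₁ hlen.symm
  exact le_antisymm (M.deg_le_of_actW_eq hg a hg₁₂) (M.deg_le_of_actW_eq hg a hg₂₁)

/-- For a self-invertible Mealy automaton `M` and a letter `a`, two words
of `Lan(a)` of the same length have the same degree in `Lan(a)`. -/
theorem stmt14 {Q A : Type*} [Fintype Q] [Nonempty Q] [Fintype A] [Nonempty A]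
    (M : Mealy Q A) (hg : M.SelfInvertible) (a : A) (v₁ v₂ : List A)
    (h₁ : v₁ ∈ M.Lan a) (h₂ : v₂ ∈ M.Lan a) (hlen : v₁.length = v₂.length) :
    M.deg a v₁ = M.deg a v₂ :=
  stmt14_general M hg a v₁ v₂ h₁ h₂ hlen

end AutGrp
end
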